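/- (Gessel's theorem, finite-variable form.) Let p, q, n ≥ 1 be integers and let x ∈ ℝ^p, y ∈ ℝ^q satisfy |x_i| < 1 for all i and |y_j| < 1 for all j. For i ∈ ℤ set A_i := ∑_{ℓ=0}^∞ h_{ℓ+i}(x)·h_ℓ(y) (the series converges absolutely). Then the family ( s_λ(x)·s_λ(y) ), indexed by partitions λ of length at most n, is absolutely summable, and ∑_{λ : ℓ(λ) ≤ n} s_λ(x)·s_λ(y) = det( (A_{i−j})_{1≤i,j≤n} ). -/

import Mathlib

/-!
Gessel's identity is the Cauchy–Binet formula for the `n × ℤ` matrices `H_x = (h_{k+i}(x))_{i,k}`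
and `H_y`. The `(i, j)` entry of `H_x H_yᵀ` is `A_{i-j}`, and the minor of `H_x` on columns
`m_0 > ⋯ > m_{n-1}` is the Jacobi–Trudi determinant of the partition `λ_j = m_j + j`, or `0` as
soon as some `m_j + j < 0` (its last column vanishes). Absolute convergence, which justifies
expanding the determinant of series into a series over all tuples `m : Fin n → ℤ` and regrouping
the tuples by their decreasing rearrangement, comes from `∑_r |h_r(x)| ≤ ∏_i (1 - |x_i|)⁻¹`.
-/

open scoped BigOperators

noncomputable def hpoly {p : ℕ} (x : Fin p → ℝ) (r : ℤ) : ℝ :=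
  if 0 ≤ r then ∑ d ∈ Finset.Nat.antidiagonalTuple p r.toNat, ∏ i, x i ^ d i
  else 0

noncomputable def schur {p n : ℕ} (lam : Fin n → ℕ) (x : Fin p → ℝ) : ℝ :=
  Matrix.det (Matrix.of fun i j : Fin n =>
    hpoly x ((lam i : ℤ) - ((i : ℕ) : ℤ) + ((j : ℕ) : ℤ)))

open Finset Function

section PiProducts

variable {κ : Type*}

theorem Fin.prod_consEquiv_apply {M : Type*} [CommMonoid M] {n : ℕ} (g : Fin (n + 1) → κ → M)
    (z : κ × (Fin n → κ)) :
    ∏ i, g i (Fin.consEquiv (fun _ => κ) z i) = g 0 z.1 * ∏ i : Fin n, g i.succ (z.2 i) := by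
  simp [Fin.consEquiv, Fin.prod_univ_succ]

variable {R : Type*} [NormedCommRing R]

theorem summable_norm_prod_pi : ∀ {n : ℕ} {g : Fin n → κ → R},
    (∀ i, Summable fun k => ‖g i k‖) → Summable fun m : Fin n → κ => ‖∏ i, g i (m i)‖
  | 0, _, _ => Summable.of_finite
  | n + 1, g, hg => by
    refine (Fin.consEquiv fun _ => κ).summable_iff.mp <|
      ((hg 0).mul_norm (summable_norm_prod_pi fun i => hg i.succ)).congr fun z => ?_
    simp only [Function.comp_apply, Fin.prod_consEquiv_apply]

theorem hasSum_prod_pi [CompleteSpace R] : ∀ {n : ℕ} {g : Fin n → κ → R},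
    (∀ i, Summable fun k => ‖g i k‖) →
      HasSum (fun m : Fin n → κ => ∏ i, g i (m i)) (∏ i, ∑' k, g i k)
  | 0, _, _ => by simp
  | n + 1, g, hg => by
    have hhead := (hg 0).of_norm.hasSum
    have htail := hasSum_prod_pi fun i : Fin n => hg i.succ
    have hprod := summable_mul_of_summable_norm (hg 0)
      (summable_norm_prod_pi fun i : Fin n => hg i.succ)
    rw [← (Fin.consEquiv fun _ => κ).hasSum_iff, Fin.prod_univ_succ]
    exact (hhead.mul htail hprod).congr_fun fun z => Fin.prod_consEquiv_apply g z

end PiProducts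

section Tuples

variable {κ : Type*} [LinearOrder κ] {n : ℕ}

theorem exists_strictAnti_comp_perm {m : Fin n → κ} (hm : Injective m) :
    ∃ (m₀ : Fin n → κ) (σ : Equiv.Perm (Fin n)), StrictAnti m₀ ∧ m₀ ∘ σ = m := by
  -- sorting `m` increasingly in `κᵒᵈ` sorts it decreasingly in `κ`
  set σ := Tuple.sort (OrderDual.toDual ∘ m)
  refine ⟨m ∘ σ, σ⁻¹, ?_, by ext; simp⟩
  exact (Tuple.monotone_sort (OrderDual.toDual ∘ m)).strictMono_of_injective
    (hm.comp σ.injective)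

theorem injective_comp_perm_of_strictAnti :
    Injective fun z : {m : Fin n → κ // StrictAnti m} × Equiv.Perm (Fin n) => z.1.1 ∘ z.2 := by
  rintro ⟨⟨m₀, hm₀⟩, σ⟩ ⟨⟨m₁, hm₁⟩, τ⟩ h
  dsimp only at h
  obtain rfl : m₀ = m₁ := (hm₀.range_inj hm₁).mp <| by
    rw [← σ.surjective.range_comp, h, τ.surjective.range_comp]
  obtain rfl : σ = τ := Equiv.ext fun i => hm₀.injective (congrFun h i)
  rfl

theorem StrictAnti.antitone_add_val {m : Fin n → ℤ} (hm : StrictAnti m) :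
    Antitone fun j : Fin n => m j + j := by
  cases n with
  | zero => exact fun a => a.elim0
  | succ n =>
    refine Fin.antitone_iff_succ_le.mpr fun j => ?_
    have := hm (Fin.castSucc_lt_succ (i := j))
    simp only [Fin.val_succ, Fin.val_castSucc, Nat.cast_add, Nat.cast_one]
    omega

end Tuples

namespace Matrix

open Equiv

variable {R κ : Type*} {n : ℕ}

theorem det_submatrix_eq_zero_of_not_injective [CommRing R] (A : Matrix (Fin n) κ R)
    {m : Fin n → κ} (hm : ¬ Injective m) : (A.submatrix id m).det = 0 := by
  obtain ⟨i, j, hij, hne⟩ := Function.not_injective_iff.mp hm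
  exact det_zero_of_column_eq hne fun k => by simp [hij]

theorem sum_perm_prod_mul_det_submatrix_comp [CommRing R] (A B : Matrix (Fin n) κ R)
    (m : Fin n → κ) :
    ∑ σ : Perm (Fin n), (∏ i, B i (m (σ i))) * (A.submatrix id (m ∘ σ)).det =
      (A.submatrix id m).det * (B.submatrix id m).det := by
  calc ∑ σ : Perm (Fin n), (∏ i, B i (m (σ i))) * (A.submatrix id (m ∘ σ)).det
      = (A.submatrix id m).det *
          ∑ σ : Perm (Fin n), ((Perm.sign σ : ℤ) : R) * ∏ i, B i (m (σ i)) := by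
        rw [mul_sum]
        refine sum_congr rfl fun σ _ => ?_
        rw [show A.submatrix id (m ∘ σ) = (A.submatrix id m).submatrix id σ from rfl,
          det_permute']
        ring
    _ = (A.submatrix id m).det * (B.submatrix id m).det := by
        rw [← det_transpose (B.submatrix id m), det_apply' (B.submatrix id m)ᵀ]
        rfl

theorem hasSum_prod_mul_det_submatrix [NormedCommRing R] [CompleteSpace R]
    (A B : Matrix (Fin n) κ R) (hAB : ∀ i j, Summable fun k => ‖A i k * B j k‖) :
    HasSum (fun m : Fin n → κ => (∏ i, B i (m i)) * (A.submatrix id m).det)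
      (of fun i j => ∑' k, A i k * B j k).det := by
  have hσ (σ : Perm (Fin n)) :
      HasSum (fun m : Fin n → κ => ((Perm.sign σ : ℤ) : R) * ∏ i, A (σ i) (m i) * B i (m i))
        (((Perm.sign σ : ℤ) : R) * ∏ i, ∑' k, A (σ i) k * B i k) :=
    (hasSum_prod_pi fun i => hAB (σ i) i).mul_left _
  rw [det_apply']
  refine (hasSum_sum fun σ _ => hσ σ).congr_fun fun m => ?_
  rw [det_apply', mul_sum]
  refine sum_congr rfl fun σ _ => ?_
  rw [prod_mul_distrib]
  simp only [submatrix_apply, id_eq]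
  ring

theorem hasSum_det_submatrix_mul_det_submatrix [NormedCommRing R] [CompleteSpace R]
    [LinearOrder κ] (A B : Matrix (Fin n) κ R) (hAB : ∀ i j, Summable fun k => ‖A i k * B j k‖) :
    HasSum (fun m : {m : Fin n → κ // StrictAnti m} =>
      (A.submatrix id m).det * (B.submatrix id m).det) (of fun i j => ∑' k, A i k * B j k).det := by
  have hsupp (m : Fin n → κ) (hm : m ∉ Set.range fun z : {m : Fin n → κ // StrictAnti m} ×
      Perm (Fin n) => z.1.1 ∘ z.2) : (∏ i, B i (m i)) * (A.submatrix id m).det = 0 := by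
    by_cases hinj : Injective m
    · obtain ⟨m₀, σ, hm₀, rfl⟩ := exists_strictAnti_comp_perm hinj
      exact absurd ⟨(⟨m₀, hm₀⟩, σ), rfl⟩ hm
    · rw [det_submatrix_eq_zero_of_not_injective A hinj, mul_zero]
  refine ((injective_comp_perm_of_strictAnti.hasSum_iff hsupp).mpr
    (hasSum_prod_mul_det_submatrix A B hAB)).prod_fiberwise fun m => ?_
  rw [← sum_perm_prod_mul_det_submatrix_comp]
  exact hasSum_fintype _

end Matrix

section Hpoly

variable {p q : ℕ} (x : Fin p → ℝ) (y : Fin q → ℝ)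

theorem hpoly_of_neg {r : ℤ} (hr : r < 0) : hpoly x r = 0 :=
  if_neg hr.not_ge

theorem abs_hpoly_natCast_le (N : ℕ) :
    |hpoly x N| ≤ ∑ d ∈ Nat.antidiagonalTuple p N, ∏ i, |x i| ^ d i := by
  simp only [hpoly, Nat.cast_nonneg, if_true, Int.toNat_natCast]
  refine (abs_sum_le_sum_abs _ _).trans_eq (sum_congr rfl fun d _ => ?_)
  simp only [abs_prod, abs_pow]

theorem tsum_nat_hpoly_mul_hpoly (a b : ℤ) :
    ∑' ℓ : ℕ, hpoly x (ℓ + (a - b)) * hpoly y ℓ = ∑' k : ℤ, hpoly x (k + a) * hpoly y (k + b) := by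
  set G : ℤ → ℝ := fun k => hpoly x (k + (a - b)) * hpoly y k
  have hsupp : Function.support G ⊆ Set.range ((↑) : ℕ → ℤ) := fun k hk => by
    by_contra hneg
    exact hk (by simp only [G, hpoly_of_neg y (by simpa using hneg), mul_zero])
  calc ∑' ℓ : ℕ, G ℓ = ∑' k : ℤ, G k := Nat.cast_injective.tsum_eq hsupp
    _ = ∑' k : ℤ, G (k + b) := ((Equiv.addRight b).tsum_eq G).symm
    _ = ∑' k : ℤ, hpoly x (k + a) * hpoly y (k + b) := by simp only [G, add_add_sub_cancel]

variable {x y}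

theorem summable_abs_hpoly (hx : ∀ i, |x i| < 1) : Summable fun r : ℤ => |hpoly x r| := by
  have hgeom (i : Fin p) : Summable fun k : ℕ => ‖|x i| ^ k‖ := by
    simpa using summable_geometric_of_lt_one (abs_nonneg (x i)) (hx i)
  have htuple : Summable fun d : Fin p → ℕ => ∏ i, |x i| ^ d i :=
    (hasSum_prod_pi hgeom).summable
  have hdeg : Summable fun N : ℕ => ∑ d ∈ Nat.antidiagonalTuple p N, ∏ i, |x i| ^ d i := by
    refine ((Nat.sigmaAntidiagonalTupleEquivTuple p).summable_iff.mpr htuple).sigma.congr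
      fun N => ?_
    exact Finset.tsum_subtype _ fun d : Fin p → ℕ => ∏ i, |x i| ^ d i
  refine Summable.of_nat_of_neg_add_one ?_ ?_
  · exact hdeg.of_nonneg_of_le (fun _ => abs_nonneg _) (abs_hpoly_natCast_le x)
  · refine summable_zero.congr fun N => ?_
    rw [hpoly_of_neg x (by omega), abs_zero]

theorem summable_norm_hpoly_mul_hpoly (hx : ∀ i, |x i| < 1) (hy : ∀ j, |y j| < 1) (a b : ℤ) :
    Summable fun k : ℤ => ‖hpoly x (k + a) * hpoly y (k + b)‖ := by
  have hX := summable_abs_hpoly hx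
  have hY := (summable_abs_hpoly hy).comp_injective (add_left_injective b)
  refine (hY.mul_left (∑' r, |hpoly x r|)).of_nonneg_of_le (fun _ => norm_nonneg _) fun k => ?_
  rw [Real.norm_eq_abs, abs_mul]
  exact mul_le_mul_of_nonneg_right (hX.le_tsum _ fun _ _ => abs_nonneg _) (abs_nonneg _)

end Hpoly

section Partitions

variable {n : ℕ}

def shiftedParts (lam : {f : Fin n → ℕ // Antitone f}) : {m : Fin n → ℤ // StrictAnti m} :=
  ⟨fun i => lam.1 i - i, fun a b hab => by
    have := lam.2 hab.le
    have : (a : ℕ) < b := hab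
    show (lam.1 b : ℤ) - b < lam.1 a - a
    omega⟩

theorem shiftedParts_injective : Injective (shiftedParts (n := n)) := fun lam mu h =>
  Subtype.ext <| funext fun i => by simpa [shiftedParts] using congrFun (congrArg Subtype.val h) i

theorem exists_shiftedParts_eq {m : {m : Fin n → ℤ // StrictAnti m}} (hm : ∀ j, 0 ≤ m.1 j + j) :
    ∃ lam, shiftedParts lam = m :=
  ⟨⟨fun j => (m.1 j + j).toNat, fun _ _ hab => Int.toNat_le_toNat (m.2.antitone_add_val hab)⟩,
    Subtype.ext <| funext fun j => by
      simp only [shiftedParts, Int.toNat_of_nonneg (hm j), add_sub_cancel_right]⟩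

end Partitions

noncomputable def hpolyMatrix {p : ℕ} (x : Fin p → ℝ) (n : ℕ) : Matrix (Fin n) ℤ ℝ :=
  Matrix.of fun i k => hpoly x (k + i)

section HpolyMatrix

variable {p n : ℕ} (x : Fin p → ℝ)

theorem det_hpolyMatrix_submatrix_shiftedParts (lam : {f : Fin n → ℕ // Antitone f}) :
    ((hpolyMatrix x n).submatrix id (shiftedParts lam).1).det = schur lam.1 x := by
  rw [schur, ← Matrix.det_transpose]
  rfl

theorem det_hpolyMatrix_submatrix_eq_zero {m : {m : Fin n → ℤ // StrictAnti m}}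
    (hm : m ∉ Set.range shiftedParts) : ((hpolyMatrix x n).submatrix id m.1).det = 0 := by
  obtain ⟨j, hj⟩ : ∃ j, m.1 j + j < 0 := by
    by_contra! h
    exact hm (exists_shiftedParts_eq h)
  have hn : 0 < n := j.pos
  set last : Fin n := ⟨n - 1, by omega⟩
  have hlast : m.1 last + last < 0 :=
    (m.2.antitone_add_val (Fin.mk_le_mk.mpr (by omega) : j ≤ last)).trans_lt hj
  refine Matrix.det_eq_zero_of_column_eq_zero last fun i => hpoly_of_neg x ?_
  have : (i : ℕ) ≤ last := by simp only [last]; omega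
  simp only [id_eq]
  omega

end HpolyMatrix

theorem gessel_theorem (p q n : ℕ)
    (x : Fin p → ℝ) (y : Fin q → ℝ)
    (hx : ∀ i, |x i| < 1) (hy : ∀ j, |y j| < 1) :
    Summable (fun lam : {f : Fin n → ℕ // Antitone f} =>
      schur lam.1 x * schur lam.1 y) ∧
    ∑' lam : {f : Fin n → ℕ // Antitone f}, schur lam.1 x * schur lam.1 y =
      Matrix.det (Matrix.of fun i j : Fin n =>
        ∑' ℓ : ℕ, hpoly x ((ℓ : ℤ) + (((i : ℕ) : ℤ) - ((j : ℕ) : ℤ))) *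
          hpoly y (ℓ : ℤ)) := by
  have hentries : (Matrix.of fun i j : Fin n =>
        ∑' ℓ : ℕ, hpoly x ((ℓ : ℤ) + (((i : ℕ) : ℤ) - ((j : ℕ) : ℤ))) * hpoly y (ℓ : ℤ)) =
      Matrix.of fun i j => ∑' k, hpolyMatrix x n i k * hpolyMatrix y n j k := by
    ext i j
    exact tsum_nat_hpoly_mul_hpoly x y i j
  have h := Matrix.hasSum_det_submatrix_mul_det_submatrix (hpolyMatrix x n) (hpolyMatrix y n)
    fun i j => summable_norm_hpoly_mul_hpoly hx hy i j
  rw [← hentries, ← shiftedParts_injective.hasSum_iff fun m hm => by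
    rw [det_hpolyMatrix_submatrix_eq_zero x hm, zero_mul]] at h
  have hschur : HasSum (fun lam : {f : Fin n → ℕ // Antitone f} =>
      schur lam.1 x * schur lam.1 y) _ := h.congr_fun fun lam => by
    simp only [Function.comp_apply, det_hpolyMatrix_submatrix_shiftedParts]
  exact ⟨hschur.summable, hschur.tsum_eq⟩
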